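/- arXiv:1810.01464 — 4 statements merged into one kernel-verified Lean document; each statement's English description precedes it below -/
import Mathlib

section
/- For positive semi-definite n×n complex matrices Z and A and any real p ≥ 1, the Frobenius norm satisfies ‖Z^(1/p) − A^(1/p)‖_F ≤ n^((p−1)/2) · ‖Z − A‖_F^(1/p), where X^(1/p) denotes the unique positive semi-definite p-th root of X. -/
open Matrix
open scoped ComplexOrder

attribute [local instance] Matrix.frobeniusNormedAddCommGroup

/-- Functional calculus: apply `f : ℝ → ℝ` to the eigenvalues of a Hermitian matrix
via its spectral decomposition (junk value `0` if the matrix is not Hermitian). -/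
noncomputable def herFun {n : Type*} [Fintype n] [DecidableEq n]
    (f : ℝ → ℝ) (M : Matrix n n ℂ) : Matrix n n ℂ :=
  if h : M.IsHermitian then
    (h.eigenvectorUnitary : Matrix n n ℂ) *
      Matrix.diagonal (fun i => (f (h.eigenvalues i) : ℂ)) *
      star (h.eigenvectorUnitary : Matrix n n ℂ)
  else 0

/-- `M ^ s` for a positive semidefinite matrix `M` (the unique positive semidefinite
`s`-th power); junk value for non-Hermitian `M`. -/
noncomputable def herPow {n : Type*} [Fintype n] [DecidableEq n]
    (M : Matrix n n ℂ) (s : ℝ) : Matrix n n ℂ :=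
  herFun (fun t => (max t 0) ^ s) M

/-!
Diagonalize `Z = U diag(α) U*` and `A = V diag(β) V*` and put `C = U* V`. Unitary invariance of
the Frobenius norm turns both norms into weighted sums over pairs `(i, j)` with the weights
`|C i j|²`, which add up to `n` because `C` is unitary:
`‖Z^(1/p) - A^(1/p)‖² = ∑ |C i j|² (α i ^ (1/p) - β j ^ (1/p))²` and
`‖Z - A‖² = ∑ |C i j|² (α i - β j)²`.
The scalar bound `|a^(1/p) - b^(1/p)| ≤ |a - b|^(1/p)` and the weighted Hölder inequality then give
the estimate with the sharper exponent `(1 - 1/p)/2 ≤ (p - 1)/2`.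
-/

namespace Real

theorem abs_rpow_sub_rpow_le {q : ℝ} (hq₀ : 0 ≤ q) (hq₁ : q ≤ 1) {a b : ℝ} (ha : 0 ≤ a)
    (hb : 0 ≤ b) : |a ^ q - b ^ q| ≤ |a - b| ^ q := by
  wlog hba : b ≤ a generalizing a b
  · rw [abs_sub_comm, abs_sub_comm a]
    exact this hb ha (le_of_not_ge hba)
  have hsub : a ^ q ≤ (a - b) ^ q + b ^ q := by
    simpa using rpow_add_le_add_rpow (sub_nonneg.mpr hba) hb hq₀ hq₁
  have hmono : b ^ q ≤ a ^ q := rpow_le_rpow hb hba hq₀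
  rw [abs_of_nonneg (sub_nonneg.mpr hmono), abs_of_nonneg (sub_nonneg.mpr hba)]
  linarith

theorem sum_mul_rpow_inv_sub_rpow_inv_sq_le {ι : Type*} (s : Finset ι) {p : ℝ} (hp : 1 ≤ p)
    {w x y : ι → ℝ} (hw : ∀ i, 0 ≤ w i) (hx : ∀ i, 0 ≤ x i) (hy : ∀ i, 0 ≤ y i) :
    ∑ i ∈ s, w i * (x i ^ p⁻¹ - y i ^ p⁻¹) ^ 2
      ≤ (∑ i ∈ s, w i) ^ (1 - p⁻¹) * (∑ i ∈ s, w i * (x i - y i) ^ 2) ^ p⁻¹ := by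
  have hp₀ : 0 < p := zero_lt_one.trans_le hp
  have hpoint (i : ι) : (x i ^ p⁻¹ - y i ^ p⁻¹) ^ 2 ≤ ((x i - y i) ^ 2) ^ p⁻¹ := by
    rw [← sq_abs, ← sq_abs (x i - y i), ← rpow_natCast, ← rpow_natCast, ← rpow_mul (abs_nonneg _),
      mul_comm, rpow_mul (abs_nonneg _)]
    exact rpow_le_rpow (abs_nonneg _)
      (abs_rpow_sub_rpow_le (inv_nonneg.mpr hp₀.le) (inv_le_one_of_one_le₀ hp) (hx i) (hy i))
      (by norm_num)
  calc ∑ i ∈ s, w i * (x i ^ p⁻¹ - y i ^ p⁻¹) ^ 2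
      ≤ ∑ i ∈ s, w i * ((x i - y i) ^ 2) ^ p⁻¹ :=
        Finset.sum_le_sum fun i _ => mul_le_mul_of_nonneg_left (hpoint i) (hw i)
    _ ≤ (∑ i ∈ s, w i) ^ (1 - p⁻¹) * (∑ i ∈ s, w i * (((x i - y i) ^ 2) ^ p⁻¹) ^ p) ^ p⁻¹ :=
        inner_le_weight_mul_Lp_of_nonneg s hp _ _ hw fun i => by positivity
    _ = (∑ i ∈ s, w i) ^ (1 - p⁻¹) * (∑ i ∈ s, w i * (x i - y i) ^ 2) ^ p⁻¹ := by
        simp only [rpow_inv_rpow (sq_nonneg _) hp₀.ne']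

end Real

namespace Matrix

variable {m n 𝕜 : Type*} [Fintype m] [Fintype n]

theorem frobenius_norm_sq {α : Type*} [NormedAddCommGroup α] (M : Matrix m n α) :
    ‖M‖ ^ 2 = ∑ i, ∑ j, ‖M i j‖ ^ 2 := by
  rw [frobenius_norm_def, ← Real.rpow_natCast, ← Real.rpow_mul (by positivity)]
  norm_num

variable [RCLike 𝕜]

theorem frobenius_norm_sq_eq_re_trace (M : Matrix m n 𝕜) :
    ‖M‖ ^ 2 = RCLike.re (Mᴴ * M).trace := by
  simp only [frobenius_norm_sq, trace, diag, mul_apply, conjTranspose_apply, map_sum,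
    RCLike.star_def, RCLike.conj_mul]
  rw [Finset.sum_comm]
  norm_cast

variable [DecidableEq m] {U V : Matrix m m 𝕜}

theorem frobenius_norm_mul_mul_star_of_mem_unitaryGroup (hU : U ∈ unitaryGroup m 𝕜)
    (hV : V ∈ unitaryGroup m 𝕜) (M : Matrix m m 𝕜) : ‖U * M * star V‖ = ‖M‖ := by
  have htrace : ((U * M * star V)ᴴ * (U * M * star V)).trace = (Mᴴ * M).trace :=
    calc ((U * M * star V)ᴴ * (U * M * star V)).trace
        = (V * (Mᴴ * (star U * U) * M) * star V).trace := by
          simp only [← star_eq_conjTranspose, star_mul, star_star, mul_assoc]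
      _ = (Mᴴ * M).trace := by
          rw [mem_unitaryGroup_iff'.mp hU, mul_one, trace_mul_cycle, mem_unitaryGroup_iff'.mp hV,
            one_mul]
  rw [← sq_eq_sq₀ (norm_nonneg _) (norm_nonneg _), frobenius_norm_sq_eq_re_trace,
    frobenius_norm_sq_eq_re_trace, htrace]

theorem sum_norm_sq_apply_of_mem_unitaryGroup (hU : U ∈ unitaryGroup m 𝕜) :
    ∑ i, ∑ j, ‖U i j‖ ^ 2 = Fintype.card m := by
  have hnorm := frobenius_norm_mul_mul_star_of_mem_unitaryGroup hU (one_mem _) 1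
  rw [mul_one, star_one, mul_one] at hnorm
  rw [← frobenius_norm_sq, hnorm, ← coe_nnnorm, frobenius_nnnorm_one]
  simp

theorem frobenius_norm_sq_conj_diagonal_sub (hU : U ∈ unitaryGroup m 𝕜)
    (hV : V ∈ unitaryGroup m 𝕜) (a b : m → ℝ) :
    ‖U * diagonal (fun i => (a i : 𝕜)) * star U - V * diagonal (fun i => (b i : 𝕜)) * star V‖ ^ 2
      = ∑ i, ∑ j, ‖(star U * V) i j‖ ^ 2 * (a i - b j) ^ 2 := by
  set C := star U * V
  have hfactor : U * diagonal (fun i => (a i : 𝕜)) * star U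
      - V * diagonal (fun i => (b i : 𝕜)) * star V
      = U * (diagonal (fun i => (a i : 𝕜)) * C - C * diagonal (fun i => (b i : 𝕜))) * star V := by
    simp only [C, mul_sub, sub_mul, mul_assoc, mem_unitaryGroup_iff.mp hV, mul_one]
    rw [← mul_assoc U (star U), mem_unitaryGroup_iff.mp hU, one_mul]
  have hentry (i j : m) :
      (diagonal (fun i => (a i : 𝕜)) * C - C * diagonal (fun i => (b i : 𝕜))) i j
        = (a i - b j : ℝ) * C i j := by
    simp only [Matrix.sub_apply, diagonal_mul, mul_diagonal, RCLike.ofReal_sub]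
    ring
  simp only [hfactor, frobenius_norm_mul_mul_star_of_mem_unitaryGroup hU hV, frobenius_norm_sq,
    hentry, norm_mul, RCLike.norm_ofReal, mul_pow, sq_abs, mul_comm]

theorem frobenius_norm_conj_diagonal_rpow_inv_sub_le (hU : U ∈ unitaryGroup m 𝕜)
    (hV : V ∈ unitaryGroup m 𝕜) {a b : m → ℝ} (ha : ∀ i, 0 ≤ a i) (hb : ∀ i, 0 ≤ b i) {p : ℝ}
    (hp : 1 ≤ p) :
    ‖U * diagonal (fun i => ((a i ^ p⁻¹ : ℝ) : 𝕜)) * star U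
        - V * diagonal (fun i => ((b i ^ p⁻¹ : ℝ) : 𝕜)) * star V‖
      ≤ (Fintype.card m : ℝ) ^ ((1 - p⁻¹) / 2) *
        ‖U * diagonal (fun i => (a i : 𝕜)) * star U - V * diagonal (fun i => (b i : 𝕜)) * star V‖
          ^ p⁻¹ := by
  have hC : star U * V ∈ unitaryGroup m 𝕜 := mul_mem (Unitary.star_mem hU) hV
  rw [← pow_le_pow_iff_left₀ (norm_nonneg _) (by positivity) two_ne_zero, mul_pow,
    ← Real.rpow_mul_natCast (Nat.cast_nonneg _), Real.rpow_pow_comm (norm_nonneg _),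
    frobenius_norm_sq_conj_diagonal_sub hU hV,
    frobenius_norm_sq_conj_diagonal_sub hU hV a b, ← sum_norm_sq_apply_of_mem_unitaryGroup hC]
  simp only [← Fintype.sum_prod_type', Nat.cast_ofNat, div_mul_cancel₀ _ (two_ne_zero' ℝ)]
  exact Real.sum_mul_rpow_inv_sub_rpow_inv_sq_le Finset.univ hp (fun _ => sq_nonneg _)
    (fun ij => ha ij.1) (fun ij => hb ij.2)

end Matrix

theorem Matrix.IsHermitian.eq_conj_diagonal {m 𝕜 : Type*} [Fintype m] [DecidableEq m]
    [RCLike 𝕜] {M : Matrix m m 𝕜} (hM : M.IsHermitian) :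
    M = (hM.eigenvectorUnitary : Matrix m m 𝕜) * diagonal (fun i => (hM.eigenvalues i : 𝕜)) *
      star (hM.eigenvectorUnitary : Matrix m m 𝕜) := by
  simpa [Function.comp_def] using hM.spectral_theorem

theorem herPow_eq_of_posSemidef {m : Type*} [Fintype m] [DecidableEq m] {M : Matrix m m ℂ}
    (hM : M.PosSemidef) (s : ℝ) :
    herPow M s = (hM.1.eigenvectorUnitary : Matrix m m ℂ) *
      diagonal (fun i => ((hM.1.eigenvalues i ^ s : ℝ) : ℂ)) *
      star (hM.1.eigenvectorUnitary : Matrix m m ℂ) := by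
  simp only [herPow, herFun, dif_pos hM.1, max_eq_left (hM.eigenvalues_nonneg _)]

theorem norm_herPow_inv_sub_herPow_inv_le {m : Type*} [Fintype m] [DecidableEq m]
    {Z A : Matrix m m ℂ} (hZ : Z.PosSemidef) (hA : A.PosSemidef) {p : ℝ} (hp : 1 ≤ p) :
    ‖herPow Z p⁻¹ - herPow A p⁻¹‖ ≤ (Fintype.card m : ℝ) ^ ((1 - p⁻¹) / 2) * ‖Z - A‖ ^ p⁻¹ := by
  have h := frobenius_norm_conj_diagonal_rpow_inv_sub_le hZ.1.eigenvectorUnitary.2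
    hA.1.eigenvectorUnitary.2 hZ.eigenvalues_nonneg hA.eigenvalues_nonneg hp
  convert h using 3
  · exact herPow_eq_of_posSemidef hZ _
  · exact herPow_eq_of_posSemidef hA _
  · rw [← hZ.1.eq_conj_diagonal, ← hA.1.eq_conj_diagonal]

/-- **Wihler's inequality.** For positive semidefinite `Z, A` and `p ≥ 1`,
`‖Z^(1/p) − A^(1/p)‖_F ≤ n^((p−1)/2) ‖Z − A‖_F^(1/p)` in the Frobenius norm. -/
theorem wihler_inequality {n : ℕ} (p : ℝ) (hp : 1 ≤ p)
    (Z A : Matrix (Fin n) (Fin n) ℂ) (hZ : Z.PosSemidef) (hA : A.PosSemidef) :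
    ‖herPow Z p⁻¹ - herPow A p⁻¹‖ ≤ (n : ℝ) ^ ((p - 1) / 2) * ‖Z - A‖ ^ p⁻¹ := by
  obtain rfl | hn := Nat.eq_zero_or_pos n
  · rw [Subsingleton.elim (herPow Z p⁻¹ - herPow A p⁻¹) 0, norm_zero]
    positivity
  have hexp : (1 - p⁻¹) / 2 ≤ (p - 1) / 2 := by
    -- `(p - 1) - (1 - p⁻¹) = (p - 1) * (1 - p⁻¹)`
    have hinv : p * p⁻¹ = 1 := mul_inv_cancel₀ (by positivity)
    nlinarith [mul_nonneg (sub_nonneg.2 hp) (sub_nonneg.2 (inv_le_one_of_one_le₀ hp))]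
  calc ‖herPow Z p⁻¹ - herPow A p⁻¹‖
      ≤ (n : ℝ) ^ ((1 - p⁻¹) / 2) * ‖Z - A‖ ^ p⁻¹ := by
        simpa using norm_herPow_inv_sub_herPow_inv_le hZ hA hp
    _ ≤ (n : ℝ) ^ ((p - 1) / 2) * ‖Z - A‖ ^ p⁻¹ := by
        gcongr
        exact_mod_cast hn
end

section
/- In the setting of the previous statement (Z positive semi-definite supported on ker A, b bounding ‖Ẽ‖ and ‖Z‖), one has P₁(Ẽ) Z P₀(Ẽ) = O(b²) and P₁(Ẽ) Z P₁(Ẽ) = O(b³), where P₁(Ẽ) and P₀(Ẽ) are the spectral projections of A + Ẽ onto eigenvalues near the positive part and near 0, respectively. -/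
open Matrix
open scoped Matrix.Norms.L2Operator Matrix ComplexOrder

/-- The Riesz spectral projection of `Λ_α + Ẽ` associated with the circle `C(c, R)`,
where `Λ_α = diag(Λ⁺, 0)` with `Λ⁺ = diag d`. -/
noncomputable def rieszProj {l m : ℕ} (d : Fin l → ℝ) (c : ℂ) (R : ℝ)
    (E : Matrix (Fin l ⊕ Fin m) (Fin l ⊕ Fin m) ℂ) :
    Matrix (Fin l ⊕ Fin m) (Fin l ⊕ Fin m) ℂ :=
  (2 * Real.pi * Complex.I)⁻¹ •
    (∮ z in C(c, R),
      (z • (1 : Matrix (Fin l ⊕ Fin m) (Fin l ⊕ Fin m) ℂ) -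
        (Matrix.fromBlocks (Matrix.diagonal fun i => (d i : ℂ)) 0 0 0 + E))⁻¹)

/-! With `A = diag(Λ⁺, 0)` and `P = diag(1, 0)`, the contour `C(c, R)` encloses exactly the
positive eigenvalues of `A`, so `P` is the Riesz projection of `A` along it. On either circle the
resolvent of `A` is bounded by the inverse distance to its spectrum, and a Neumann series shows
that the resolvent of `A + Ẽ` stays within `O(‖Ẽ‖)` of it once `‖Ẽ‖` is small. Integrating gives
`P₀(Ẽ) = O(1)` and `P₁(Ẽ) = P + O(‖Ẽ‖)`. As `Z` is Hermitian and `ZP = 0`, also `PZ = 0`, so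
`P₁ Z P₀ = (P₁ - P) Z P₀` and `P₁ Z P₁ = (P₁ - P) Z (P₁ - P)`, which are `O(b²)` and `O(b³)`. -/

open Metric
open scoped Ring

section NormedRing

variable {S : Type*} [NormedRing S] [HasSummableGeomSeries S]

theorem IsUnit.sub_of_norm_inverse_mul_norm_lt_one {a e : S} (ha : IsUnit a)
    (he : ‖a⁻¹ʳ‖ * ‖e‖ < 1) : IsUnit (a - e) := by
  obtain ⟨u, rfl⟩ := ha
  have h : ‖(↑u⁻¹ : S) * e‖ < 1 := (norm_mul_le _ _).trans_lt (by rwa [← Ring.inverse_unit])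
  have hfactor : (u : S) - e = u * (Units.oneSub _ h : S) := by simp [mul_sub]
  exact hfactor ▸ (u * Units.oneSub _ h).isUnit

theorem norm_inverse_sub_le {a e : S} {M : ℝ} (ha : IsUnit a) (hM : ‖a⁻¹ʳ‖ ≤ M)
    (he : M * ‖e‖ ≤ 1 / 2) :
    ‖(a - e)⁻¹ʳ‖ ≤ 2 * M ∧ ‖(a - e)⁻¹ʳ - a⁻¹ʳ‖ ≤ 2 * M ^ 2 * ‖e‖ := by
  have hunit : IsUnit (a - e) :=
    ha.sub_of_norm_inverse_mul_norm_lt_one (by nlinarith [norm_nonneg e, norm_nonneg a⁻¹ʳ])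
  have hres : (a - e)⁻¹ʳ - a⁻¹ʳ = (a - e)⁻¹ʳ * e * a⁻¹ʳ := by
    rw [Ring.inverse_sub_inverse (iff_of_true hunit ha), sub_sub_cancel]
  have hdiff : ‖(a - e)⁻¹ʳ - a⁻¹ʳ‖ ≤ ‖(a - e)⁻¹ʳ‖ * ‖e‖ * M := by
    rw [hres]
    refine (norm_mul_le _ _).trans ?_
    gcongr
    exact norm_mul_le _ _
  have hbound : ‖(a - e)⁻¹ʳ‖ ≤ 2 * M := by
    have := norm_le_norm_add_norm_sub' (a - e)⁻¹ʳ a⁻¹ʳ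
    nlinarith [norm_nonneg (a - e)⁻¹ʳ]
  refine ⟨hbound, hdiff.trans ?_⟩
  calc ‖(a - e)⁻¹ʳ‖ * ‖e‖ * M ≤ 2 * M * ‖e‖ * M := by gcongr; exact (norm_nonneg _).trans hM
    _ = 2 * M ^ 2 * ‖e‖ := by ring

end NormedRing

section SeminormedRing

variable {S : Type*} [NonUnitalSeminormedRing S]

theorem norm_mul_mul_le_of_mul_eq_zero {P Z : S} (hPZ : P * Z = 0) (Q X : S) :
    ‖Q * Z * X‖ ≤ ‖Q - P‖ * ‖Z‖ * ‖X‖ := by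
  have hQZ : Q * Z = (Q - P) * Z := by rw [sub_mul, hPZ, sub_zero]
  rw [hQZ]
  exact (norm_mul_le _ _).trans (by gcongr; exact norm_mul_le _ _)

theorem norm_mul_mul_self_le_of_mul_eq_zero {P Z : S} (hPZ : P * Z = 0) (hZP : Z * P = 0)
    (Q : S) : ‖Q * Z * Q‖ ≤ ‖Q - P‖ * ‖Z‖ * ‖Q - P‖ := by
  have hZQ : Q * Z * Q = Q * Z * (Q - P) := by
    rw [mul_sub, mul_assoc Q Z P, hZP, mul_zero, sub_zero]
  rw [hZQ]
  exact norm_mul_mul_le_of_mul_eq_zero hPZ Q (Q - P)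

end SeminormedRing

theorem circleIntegral_sub_inv_of_lt_norm_sub {c w : ℂ} {R : ℝ} (hR : 0 ≤ R)
    (hw : R < ‖w - c‖) : (∮ z in C(c, R), (z - w)⁻¹) = 0 := by
  refine DiffContOnCl.circleIntegral_eq_zero hR (DifferentiableOn.diffContOnCl ?_)
  refine DifferentiableOn.mono ?_ closure_ball_subset_closedBall
  refine (differentiableOn_id.sub_const w).inv fun z hz => sub_ne_zero.2 ?_
  rintro rfl
  exact (mem_closedBall_iff_norm.1 hz).not_gt hw

theorem exists_pos_le_norm_sub_of_notMem_sphere {ι E : Type*} [Finite ι]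
    [SeminormedAddCommGroup E] {v : ι → E} {c : E} {R : ℝ} (hv : ∀ i, v i ∉ sphere c R) :
    ∃ ρ > 0, ∀ z ∈ sphere c R, ∀ i, ρ ≤ ‖z - v i‖ := by
  have hpos : ∀ i, 0 < |R - ‖v i - c‖| := fun i =>
    abs_pos.2 (sub_ne_zero.2 (Ne.symm (mt mem_sphere_iff_norm.2 (hv i))))
  obtain ⟨ρ, hρle, hρ⟩ := (((Filter.eventually_all.2 fun i => eventually_le_nhds (hpos i))
    |>.filter_mono nhdsWithin_le_nhds).and (self_mem_nhdsWithin (s := Set.Ioi (0 : ℝ)))).exists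
  refine ⟨ρ, hρ, fun z hz i => (hρle i).trans ?_⟩
  calc |R - ‖v i - c‖| = |‖z - c‖ - ‖v i - c‖| := by rw [mem_sphere_iff_norm.1 hz]
    _ ≤ ‖(z - c) - (v i - c)‖ := abs_norm_sub_norm_le _ _
    _ = ‖z - v i‖ := by rw [sub_sub_sub_cancel_right]

namespace Matrix

variable {n : Type*} [DecidableEq n]

theorem smul_one_sub_diagonal (z : ℂ) (v : n → ℂ) :
    z • (1 : Matrix n n ℂ) - diagonal v = diagonal fun i => z - v i := by
  rw [smul_one_eq_diagonal, diagonal_sub]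

variable [Fintype n] {z : ℂ} {v : n → ℂ} {ρ : ℝ}

theorem isUnit_smul_one_sub_diagonal (hz : ∀ i, z ≠ v i) :
    IsUnit (z • (1 : Matrix n n ℂ) - diagonal v) := by
  rw [smul_one_sub_diagonal, isUnit_diagonal, Pi.isUnit_iff]
  exact fun i => (sub_ne_zero.2 (hz i)).isUnit

theorem inv_smul_one_sub_diagonal (hz : ∀ i, z ≠ v i) :
    (z • (1 : Matrix n n ℂ) - diagonal v)⁻¹ = diagonal fun i => (z - v i)⁻¹ := by
  rw [smul_one_sub_diagonal]
  refine inv_eq_left_inv ?_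
  rw [diagonal_mul_diagonal, ← diagonal_one]
  exact congrArg diagonal (funext fun i => inv_mul_cancel₀ (sub_ne_zero.2 (hz i)))

theorem norm_inv_smul_one_sub_diagonal_le (hρ : 0 < ρ) (hz : ∀ i, ρ ≤ ‖z - v i‖) :
    ‖(z • (1 : Matrix n n ℂ) - diagonal v)⁻¹‖ ≤ ρ⁻¹ := by
  have hne : ∀ i, z ≠ v i := fun i => sub_ne_zero.1 (norm_pos_iff.1 (hρ.trans_le (hz i)))
  rw [inv_smul_one_sub_diagonal hne, l2_opNorm_diagonal, pi_norm_le_iff_of_nonneg (by positivity)]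
  intro i
  rw [norm_inv]
  exact inv_anti₀ hρ (hz i)

theorem isUnit_smul_one_sub_diagonal_add (hρ : 0 < ρ) (hz : ∀ i, ρ ≤ ‖z - v i‖)
    {E : Matrix n n ℂ} (hE : ‖E‖ < ρ) : IsUnit (z • (1 : Matrix n n ℂ) - (diagonal v + E)) := by
  have hne : ∀ i, z ≠ v i := fun i => sub_ne_zero.1 (norm_pos_iff.1 (hρ.trans_le (hz i)))
  rw [← sub_sub]
  refine (isUnit_smul_one_sub_diagonal hne).sub_of_norm_inverse_mul_norm_lt_one ?_
  rw [← nonsing_inv_eq_ringInverse]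
  calc ‖(z • (1 : Matrix n n ℂ) - diagonal v)⁻¹‖ * ‖E‖ ≤ ρ⁻¹ * ‖E‖ := by
        gcongr; exact norm_inv_smul_one_sub_diagonal_le hρ hz
    _ < ρ⁻¹ * ρ := by gcongr
    _ = 1 := inv_mul_cancel₀ hρ.ne'

theorem norm_inv_smul_one_sub_diagonal_add_le (hρ : 0 < ρ) (hz : ∀ i, ρ ≤ ‖z - v i‖)
    {E : Matrix n n ℂ} (hE : ‖E‖ ≤ ρ / 2) :
    ‖(z • (1 : Matrix n n ℂ) - (diagonal v + E))⁻¹‖ ≤ 2 * ρ⁻¹ ∧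
      ‖(z • (1 : Matrix n n ℂ) - (diagonal v + E))⁻¹ - (z • (1 : Matrix n n ℂ) - diagonal v)⁻¹‖
        ≤ 2 * ρ⁻¹ ^ 2 * ‖E‖ := by
  have hne : ∀ i, z ≠ v i := fun i => sub_ne_zero.1 (norm_pos_iff.1 (hρ.trans_le (hz i)))
  have hsmall : ρ⁻¹ * ‖E‖ ≤ 1 / 2 := by
    rw [inv_mul_le_iff₀ hρ]; linarith
  simp only [← sub_sub, nonsing_inv_eq_ringInverse]
  refine norm_inverse_sub_le (isUnit_smul_one_sub_diagonal hne) ?_ hsmall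
  rw [← nonsing_inv_eq_ringInverse]
  exact norm_inv_smul_one_sub_diagonal_le hρ hz

theorem continuousOn_inv_smul_one_sub {A : Matrix n n ℂ} {s : Set ℂ}
    (hA : ∀ z ∈ s, IsUnit (z • (1 : Matrix n n ℂ) - A)) :
    ContinuousOn (fun z : ℂ => (z • (1 : Matrix n n ℂ) - A)⁻¹) s := by
  intro z hz
  obtain ⟨u, hu⟩ := hA z hz
  simp only [nonsing_inv_eq_ringInverse]
  refine ContinuousAt.continuousWithinAt (ContinuousAt.comp (g := Ring.inverse) ?_ (by fun_prop))
  rw [← hu]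
  exact NormedRing.inverse_continuousAt u

theorem circleIntegral_diagonal {c : ℂ} {R : ℝ} {f : n → ℂ → ℂ}
    (hf : ∀ i, CircleIntegrable (f i) c R) :
    (∮ z in C(c, R), diagonal fun i => f i z) = diagonal fun i => ∮ z in C(c, R), f i z := by
  have hsum : ∀ g : n → ℂ, diagonal g = ∑ i, g i • single i i (1 : ℂ) := fun g => by
    simp only [smul_single, smul_eq_mul, mul_one, sum_single_eq_diagonal]
  simp only [hsum]
  rw [circleIntegral.integral_fun_sum fun i _ => (hf i).fun_smul_continuousOn continuousOn_const]
  simp only [circleIntegral.integral_smul_const]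

noncomputable def rieszProjection (A : Matrix n n ℂ) (c : ℂ) (R : ℝ) : Matrix n n ℂ :=
  (2 * Real.pi * Complex.I)⁻¹ • ∮ z in C(c, R), (z • (1 : Matrix n n ℂ) - A)⁻¹

theorem rieszProjection_diagonal {c : ℂ} {R : ℝ} (hR : 0 < R) (hv : ∀ i, v i ∉ sphere c R) :
    rieszProjection (diagonal v) c R = diagonal fun i => (ball c R).indicator 1 (v i) := by
  have hne : ∀ z ∈ sphere c R, ∀ i, z ≠ v i := fun z hz i h => hv i (h ▸ hz)
  have hint : ∀ i, CircleIntegrable (fun z => (z - v i)⁻¹) c R := fun i =>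
    circleIntegrable_sub_inv_iff.2 (Or.inr (by rw [abs_of_pos hR]; exact hv i))
  rw [rieszProjection, circleIntegral.integral_congr hR.le fun z hz =>
    inv_smul_one_sub_diagonal (hne z hz), circleIntegral_diagonal hint, ← diagonal_smul]
  congr 1 with i
  rw [Pi.smul_apply, smul_eq_mul]
  by_cases hball : v i ∈ ball c R
  · rw [Set.indicator_of_mem hball, circleIntegral.integral_sub_inv_of_mem_ball hball,
      Pi.one_apply, inv_mul_cancel₀]
    simp [Real.pi_ne_zero]
  · have hout : R < ‖v i - c‖ := lt_of_le_of_ne (not_lt.1 (mt mem_ball_iff_norm.2 hball))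
      (Ne.symm (mt mem_sphere_iff_norm.2 (hv i)))
    rw [Set.indicator_of_notMem hball, circleIntegral_sub_inv_of_lt_norm_sub hR.le hout, mul_zero]

theorem exists_norm_rieszProjection_diagonal_add_le {c : ℂ} {R : ℝ} (hR : 0 < R)
    (hv : ∀ i, v i ∉ sphere c R) :
    ∃ K > 0, ∃ δ > 0, ∀ E : Matrix n n ℂ, ‖E‖ ≤ δ →
      ‖rieszProjection (diagonal v + E) c R‖ ≤ K ∧
      ‖rieszProjection (diagonal v + E) c R - rieszProjection (diagonal v) c R‖ ≤ K * ‖E‖ := by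
  obtain ⟨ρ, hρ, hsep⟩ := exists_pos_le_norm_sub_of_notMem_sphere hv
  refine ⟨2 * R * (ρ⁻¹ + ρ⁻¹ ^ 2), by positivity, ρ / 2, by positivity, fun E hE => ?_⟩
  have hres := fun z hz => norm_inv_smul_one_sub_diagonal_add_le hρ (hsep z hz) hE
  have hint : ∀ E' : Matrix n n ℂ, ‖E'‖ ≤ ρ / 2 →
      CircleIntegrable (fun z => (z • (1 : Matrix n n ℂ) - (diagonal v + E'))⁻¹) c R :=
    fun E' hE' => (continuousOn_inv_smul_one_sub fun z hz => isUnit_smul_one_sub_diagonal_add hρ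
      (hsep z hz) (hE'.trans_lt (half_lt_self hρ))).circleIntegrable hR.le
  have hdiff : rieszProjection (diagonal v + E) c R - rieszProjection (diagonal v) c R =
      (2 * Real.pi * Complex.I)⁻¹ • ∮ z in C(c, R), ((z • (1 : Matrix n n ℂ) - (diagonal v + E))⁻¹ -
        (z • (1 : Matrix n n ℂ) - diagonal v)⁻¹) := by
    have hint₀ := hint 0 (by rw [norm_zero]; positivity)
    rw [add_zero] at hint₀
    rw [rieszProjection, rieszProjection, ← smul_sub, circleIntegral.integral_sub (hint E hE) hint₀]
  constructor
  · calc _ ≤ R * (2 * ρ⁻¹) :=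
          circleIntegral.norm_two_pi_i_inv_smul_integral_le_of_norm_le_const hR.le
            fun z hz => (hres z hz).1
      _ = 2 * R * ρ⁻¹ := by ring
      _ ≤ 2 * R * (ρ⁻¹ + ρ⁻¹ ^ 2) := by gcongr; exact le_add_of_nonneg_right (by positivity)
  · rw [hdiff]
    calc _ ≤ R * (2 * ρ⁻¹ ^ 2 * ‖E‖) :=
          circleIntegral.norm_two_pi_i_inv_smul_integral_le_of_norm_le_const hR.le
            fun z hz => (hres z hz).2
      _ = 2 * R * ρ⁻¹ ^ 2 * ‖E‖ := by ring
      _ ≤ 2 * R * (ρ⁻¹ + ρ⁻¹ ^ 2) * ‖E‖ := by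
        gcongr; exact le_add_of_nonneg_left (by positivity)

end Matrix

theorem rieszProj_eq_rieszProjection {l m : ℕ} (d : Fin l → ℝ) (c : ℂ) (R : ℝ)
    (E : Matrix (Fin l ⊕ Fin m) (Fin l ⊕ Fin m) ℂ) :
    rieszProj d c R E = (diagonal (Sum.elim (fun i => (d i : ℂ)) 0) + E).rieszProjection c R := by
  rw [rieszProj, rieszProjection, ← diagonal_zero, fromBlocks_diagonal]
  rfl

theorem rieszProjection_diagonal_sum_elim_zero {ι κ : Type*} [Fintype ι] [DecidableEq ι]
    [Fintype κ] [DecidableEq κ] {w : ι → ℂ} {c : ℂ} {R : ℝ} (hR : 0 < R)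
    (hw : ∀ i, w i ∈ ball c R) (hc : R < ‖c‖) :
    (diagonal (Sum.elim w (0 : κ → ℂ))).rieszProjection c R = fromBlocks 1 0 0 0 := by
  have h0 : (0 : ℂ) ∉ ball c R := by simpa using hc.le
  have hv : ∀ i, Sum.elim w (0 : κ → ℂ) i ∉ sphere c R := by
    rintro (i | i)
    · exact fun h => (mem_ball.1 (hw i)).ne (mem_sphere.1 h)
    · exact fun h => hc.ne' (by simpa using h)
  rw [rieszProjection_diagonal hR hv, ← diagonal_one, ← diagonal_zero, fromBlocks_diagonal]
  congr 1 with (i | i)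
  · exact Set.indicator_of_mem (hw i) _
  · exact Set.indicator_of_notMem h0 _

theorem proj_cross_terms_general {l m : ℕ} (d : Fin l → ℝ)
    (R₀ : ℝ) (hR₀ : 0 < R₀) (hsep : ∀ i, R₀ < d i)
    (c : ℂ) (R : ℝ) (hR : 0 < R)
    (henc : ∀ i, ‖(d i : ℂ) - c‖ < R) (hout : R < ‖c‖) :
    ∃ K > (0 : ℝ), ∃ δ > (0 : ℝ),
      ∀ (b : ℝ) (Et Z : Matrix (Fin l ⊕ Fin m) (Fin l ⊕ Fin m) ℂ),
        Et.IsHermitian → Z.PosSemidef →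
        Z * Matrix.fromBlocks 1 0 0 0 = 0 →
        ‖Et‖ ≤ b → ‖Z‖ ≤ b → b ≤ δ →
        ‖rieszProj d c R Et * Z * rieszProj d 0 R₀ Et‖ ≤ K * b ^ 2 ∧
        ‖rieszProj d c R Et * Z * rieszProj d c R Et‖ ≤ K * b ^ 3 := by
  set v : Fin l ⊕ Fin m → ℂ := Sum.elim (fun i => (d i : ℂ)) 0
  have hv : ∀ i, v i ∉ sphere c R := by
    rintro (i | i)
    · simp [v, mem_sphere_iff_norm, (henc i).ne]
    · simp [v, mem_sphere_iff_norm, hout.ne']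
  have hv₀ : ∀ i, v i ∉ sphere 0 R₀ := by
    rintro (i | i)
    · simp [v, abs_of_pos (hR₀.trans (hsep i)), (hsep i).ne']
    · simp [v, hR₀.ne]
  have hP : (diagonal v).rieszProjection c R = fromBlocks 1 0 0 0 :=
    rieszProjection_diagonal_sum_elim_zero hR (fun i => mem_ball_iff_norm.2 (henc i)) hout
  obtain ⟨K₁, hK₁, δ₁, hδ₁, hP₁⟩ := exists_norm_rieszProjection_diagonal_add_le hR hv
  obtain ⟨K₀, hK₀, δ₀, hδ₀, hP₀⟩ := exists_norm_rieszProjection_diagonal_add_le hR₀ hv₀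
  refine ⟨K₁ * K₀ + K₁ ^ 2, by positivity, min δ₁ δ₀, lt_min hδ₁ hδ₀, ?_⟩
  intro b E Z _ hZ hZP hEb hZb hbδ
  have hb : 0 ≤ b := (norm_nonneg E).trans hEb
  have hPZ : fromBlocks 1 0 0 0 * Z = 0 := by
    simpa [hZ.isHermitian.eq, fromBlocks_conjTranspose] using congrArg conjTranspose hZP
  have hdiff := (hP₁ E (hEb.trans (hbδ.trans (min_le_left _ _)))).2.trans
    (mul_le_mul_of_nonneg_left hEb hK₁.le)
  have hnorm₀ := (hP₀ E (hEb.trans (hbδ.trans (min_le_right _ _)))).1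
  rw [hP] at hdiff
  simp only [rieszProj_eq_rieszProjection]
  constructor
  · calc _ ≤ _ := norm_mul_mul_le_of_mul_eq_zero hPZ _ _
      _ ≤ K₁ * b * b * K₀ := by gcongr
      _ ≤ (K₁ * K₀ + K₁ ^ 2) * b ^ 2 := by nlinarith [sq_nonneg (K₁ * b)]
  · calc _ ≤ _ := norm_mul_mul_self_le_of_mul_eq_zero hPZ hZP _
      _ ≤ K₁ * b * b * (K₁ * b) := by gcongr
      _ ≤ (K₁ * K₀ + K₁ ^ 2) * b ^ 3 := by
        nlinarith [mul_nonneg (mul_pos hK₁ hK₀).le (pow_nonneg hb 3)]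

/-- If `Z ≥ 0` is supported on `ker A` (`A = diag(Λ⁺,0)`) and `b` bounds `‖Ẽ‖`, `‖Z‖`,
then `P₁(Ẽ) Z P₀(Ẽ) = O(b²)` and `P₁(Ẽ) Z P₁(Ẽ) = O(b³)`. -/
theorem proj_cross_terms {l m : ℕ} (d : Fin l → ℝ) (hd : ∀ i, 0 < d i)
    (R₀ : ℝ) (hR₀ : 0 < R₀) (hsep : ∀ i, R₀ < d i)
    (c : ℂ) (R : ℝ) (hR : 0 < R)
    (henc : ∀ i, ‖(d i : ℂ) - c‖ < R) (hout : R < ‖c‖) :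
    ∃ K > (0 : ℝ), ∃ δ > (0 : ℝ),
      ∀ (b : ℝ) (Et Z : Matrix (Fin l ⊕ Fin m) (Fin l ⊕ Fin m) ℂ),
        Et.IsHermitian → Z.PosSemidef →
        Z * Matrix.fromBlocks 1 0 0 0 = 0 →
        ‖Et‖ ≤ b → ‖Z‖ ≤ b → b ≤ δ →
        ‖rieszProj d c R Et * Z * rieszProj d 0 R₀ Et‖ ≤ K * b ^ 2 ∧
        ‖rieszProj d c R Et * Z * rieszProj d c R Et‖ ≤ K * b ^ 3 :=
  proj_cross_terms_general d R₀ hR₀ hsep c R hR henc hout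
end

section
/- Let s > 1 and define f(t) = t^s for t ≥ 0 and f(t) = 0 for t < 0; then f is C¹ on ℝ. For any positive semi-definite A = U Λ_α U*, the map E ↦ (A+E)^s (defined via f on Hermitian matrices) is Fréchet differentiable at 0 with derivative E ↦ U([f, α] ∘ (U*EU))U*, where [f,α]_{ij} = (α_i^s − α_j^s)/(α_i − α_j) for α_i ≠ α_j and s·α_i^{s−1} otherwise (interpreting 0^{s−1}·s = 0 when α_i = 0 and s > 1). -/
open Matrix
open scoped Matrix.Norms.L2Operator Matrix ComplexOrder

/-- The divided-difference matrix of `t ↦ t^s` (extended by `0` for `t < 0`) on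
`α ≥ 0`, with `s·α_i^{s−1}` interpreted as `0` when `α_i = 0` and `s > 1`. -/
noncomputable def divPowDeriv {ι : Type*} (s : ℝ) (α : ι → ℝ) : Matrix ι ι ℂ :=
  Matrix.of fun i j =>
    if α i = α j then
      (if α i = 0 then 0 else ((s * α i ^ (s - 1) : ℝ) : ℂ))
    else (((α i ^ s - α j ^ s) / (α i - α j) : ℝ) : ℂ)

/-!
Write `A = U diag(α) U*`, `A + E = V diag(β) V*`, and put `W = U* V`, `X = U* E V`, so that
`X k l = (β l - α k) W k l`. With `g = dslope f` the divided difference of `f`, this gives the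
exact identity `W f(β) - f(α) W = g(α, β) ⊙ X`; conjugated by `U`, the remainder therefore has
entries `∑ l, (g (α i) (β l) - g (α i) (α k)) X i l conj (W k l)`. For `f ∈ C¹` the function `g`
is continuous, hence uniformly continuous on a compact square, and each term is `o(‖E‖)`: when
`|β l - α k|` is small by uniform continuity of `g`, otherwise because
`|W k l| ≤ ‖E‖ / |β l - α k|` is small while `g` stays bounded.
-/

namespace Matrix

variable {𝕜 : Type*} [RCLike 𝕜] {m n : Type*} [Fintype m] [Fintype n] [DecidableEq n]

lemma norm_apply_le_l2_opNorm (M : Matrix m n 𝕜) (i : m) (j : n) : ‖M i j‖ ≤ ‖M‖ := by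
  have h := M.l2_opNorm_mulVec (EuclideanSpace.single j 1)
  rw [PiLp.norm_single, norm_one, mul_one] at h
  refine le_trans (le_of_eq ?_) ((PiLp.norm_apply_le _ i).trans h)
  simp [mulVec_single]

variable [DecidableEq m]

lemma l2_opNorm_single (i : m) (j : n) (c : 𝕜) : ‖single i j c‖ = ‖c‖ := by
  have h := l2_opNorm_conjTranspose_mul_self (single i j c)
  rw [conjTranspose_single, single_mul_single_same, ← diagonal_single, l2_opNorm_diagonal,
    Pi.norm_single, RCLike.star_def, norm_mul, RCLike.norm_conj] at h
  exact ((mul_self_inj (norm_nonneg _) (norm_nonneg _)).1 h).symm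

lemma l2_opNorm_le_sum_norm_apply (M : Matrix m n 𝕜) : ‖M‖ ≤ ∑ i, ∑ j, ‖M i j‖ := by
  conv_lhs => rw [matrix_eq_sum_single M]
  refine (norm_sum_le _ _).trans (Finset.sum_le_sum fun i _ => ?_)
  refine (norm_sum_le _ _).trans (le_of_eq ?_)
  simp [l2_opNorm_single]

lemma IsHermitian.abs_eigenvalues_le_l2_opNorm {A : Matrix n n 𝕜} (hA : A.IsHermitian) (i : n) :
    |hA.eigenvalues i| ≤ ‖A‖ := by
  have hnorm : ‖A‖ = ‖(diagonal (RCLike.ofReal ∘ hA.eigenvalues) : Matrix n n 𝕜)‖ := by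
    conv_lhs => rw [hA.spectral_theorem, Unitary.conjStarAlgAut_apply]
    rw [← Unitary.coe_star, CStarRing.norm_mul_coe_unitary, CStarRing.norm_coe_unitary_mul]
  rw [hnorm, l2_opNorm_diagonal, ← RCLike.norm_ofReal (K := 𝕜)]
  exact norm_le_pi_norm (RCLike.ofReal ∘ hA.eigenvalues) i

end Matrix

lemma CStarRing.norm_star_mul_mul_of_mem_unitary {R : Type*} [NormedRing R] [StarRing R]
    [CStarRing R] {U V : R} (hU : U ∈ unitary R) (hV : V ∈ unitary R) (A : R) :
    ‖star U * A * V‖ = ‖A‖ := by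
  rw [CStarRing.norm_mul_mem_unitary _ hV, CStarRing.norm_mem_unitary_mul _ (Unitary.star_mem hU)]

section DividedDifference

variable {E : Type*} [NormedAddCommGroup E] [NormedSpace ℝ E] [CompleteSpace E]

lemma dslope_eq_integral_deriv {f : ℝ → E} (hf : ContDiff ℝ 1 f) (a b : ℝ) :
    dslope f a b = ∫ t in (0 : ℝ)..1, deriv f (a + t * (b - a)) := by
  rcases eq_or_ne b a with rfl | hba
  · simp
  have hftc := intervalIntegral.integral_unitInterval_deriv_eq_sub (f := f) (z₀ := a)
    (z₁ := b - a)
    ((hf.continuous_deriv le_rfl).comp (by fun_prop)).continuousOn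
    fun t _ => ((hf.differentiable one_ne_zero) _).hasDerivAt
  rw [add_sub_cancel, ← sub_smul_dslope f a b] at hftc
  exact (smul_right_injective E (sub_ne_zero.2 hba) hftc).symm

lemma continuous_uncurry_dslope {f : ℝ → E} (hf : ContDiff ℝ 1 f) :
    Continuous (Function.uncurry (dslope f)) := by
  have h := intervalIntegral.continuous_parametric_intervalIntegral_of_continuous'
    (μ := MeasureTheory.volume) (f := fun (p : ℝ × ℝ) (t : ℝ) => deriv f (p.1 + t * (p.2 - p.1)))
    ((hf.continuous_deriv le_rfl).comp (by fun_prop)) 0 1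
  convert h using 2 with p
  exact dslope_eq_integral_deriv hf p.1 p.2

end DividedDifference

lemma exists_abs_sub_mul_le_of_continuous {g : ℝ → ℝ → ℝ} (hg : Continuous (Function.uncurry g))
    (R : ℝ) {ε : ℝ} (hε : 0 < ε) :
    ∃ δ > 0, ∀ a b c w : ℝ, |a| ≤ R → |b| ≤ R → |c| ≤ R → 0 ≤ w → w ≤ 1 →
      |b - c| * w ≤ δ → |g a b - g a c| * w ≤ ε := by
  have hK : IsCompact (Set.Icc (-R) R ×ˢ Set.Icc (-R) R) := isCompact_Icc.prod isCompact_Icc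
  obtain ⟨C, hC⟩ := hK.exists_bound_of_continuousOn hg.continuousOn
  obtain ⟨θ, hθ, hθg⟩ := Metric.uniformContinuousOn_iff_le.1
    (hK.uniformContinuousOn_of_continuous hg.continuousOn) ε hε
  have hM : 0 < 2 * |C| + 1 := by positivity
  refine ⟨θ * ε / (2 * |C| + 1), by positivity, fun a b c w ha hb hc hw0 hw1 hδ => ?_⟩
  have hab : (a, b) ∈ Set.Icc (-R) R ×ˢ Set.Icc (-R) R := ⟨abs_le.1 ha, abs_le.1 hb⟩
  have hac : (a, c) ∈ Set.Icc (-R) R ×ˢ Set.Icc (-R) R := ⟨abs_le.1 ha, abs_le.1 hc⟩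
  rcases le_or_gt |b - c| θ with hbc | hbc
  · have hdist : dist (a, b) (a, c) ≤ θ := by simpa [Prod.dist_eq, Real.dist_eq] using hbc
    have hg := hθg _ hab _ hac hdist
    rw [Real.dist_eq, Function.uncurry_apply_pair, Function.uncurry_apply_pair] at hg
    calc |g a b - g a c| * w ≤ |g a b - g a c| * 1 := by gcongr
      _ ≤ ε := by rwa [mul_one]
  · have hgC : |g a b - g a c| ≤ 2 * |C| + 1 := by
      have h1 := (hC _ hab).trans (le_abs_self C)
      have h2 := (hC _ hac).trans (le_abs_self C)
      simp only [Function.uncurry_apply_pair, Real.norm_eq_abs] at h1 h2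
      linarith [abs_sub (g a b) (g a c)]
    have hwθ : (2 * |C| + 1) * w * θ ≤ θ * ε := by
      rw [le_div_iff₀ hM] at hδ
      nlinarith [mul_le_mul_of_nonneg_left hbc.le (mul_nonneg hM.le hw0)]
    have hw : (2 * |C| + 1) * w ≤ ε := le_of_mul_le_mul_right (by linarith) hθ
    exact (mul_le_mul_of_nonneg_right hgC hw0).trans hw

namespace Matrix

variable {ι : Type*} [Fintype ι]

noncomputable def dslopeMatrix (f : ℝ → ℝ) (α β : ι → ℝ) : Matrix ι ι ℂ :=
  of fun i j => ((dslope f (α i) (β j) : ℝ) : ℂ)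

lemma hadamard_mul_star_sub_hadamard_apply (G D X W : Matrix ι ι ℂ) (i k : ι) :
    ((G ⊙ X) * star W - D ⊙ (X * star W)) i k = ∑ l, (G i l - D i k) * X i l * star (W k l) := by
  simp only [sub_apply, hadamard_apply, mul_apply, star_apply, Finset.mul_sum,
    ← Finset.sum_sub_distrib]
  exact Finset.sum_congr rfl fun l _ => by ring

variable [DecidableEq ι]

lemma mul_diagonal_sub_diagonal_mul_eq_dslopeMatrix_hadamard (W : Matrix ι ι ℂ) (f : ℝ → ℝ)
    (α β : ι → ℝ) :
    W * diagonal (fun j => (f (β j) : ℂ)) - diagonal (fun i => (f (α i) : ℂ)) * W =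
      dslopeMatrix f α β ⊙
        (W * diagonal (RCLike.ofReal ∘ β) - diagonal (RCLike.ofReal ∘ α) * W) := by
  ext i j
  have h : ((β j : ℂ) - α i) * ((dslope f (α i) (β j) : ℝ) : ℂ) = f (β j) - f (α i) := by
    exact_mod_cast sub_smul_dslope f (α i) (β j)
  simp only [sub_apply, mul_diagonal, diagonal_mul, hadamard_apply, dslopeMatrix, of_apply,
    Function.comp_apply, RCLike.ofReal_eq_complex_ofReal]
  linear_combination (-W i j) * h

section

variable {U V A B : Matrix ι ι ℂ} {α β : ι → ℝ}

lemma star_mul_sub_mul_eq (hU : U ∈ unitaryGroup ι ℂ) (hV : V ∈ unitaryGroup ι ℂ)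
    (hA : A = U * diagonal (RCLike.ofReal ∘ α) * star U)
    (hB : B = V * diagonal (RCLike.ofReal ∘ β) * star V) :
    star U * (B - A) * V =
      star U * V * diagonal (RCLike.ofReal ∘ β) - diagonal (RCLike.ofReal ∘ α) * (star U * V) := by
  have hU₁ (M : Matrix ι ι ℂ) : star U * (U * M) = M := by
    rw [← Matrix.mul_assoc, Unitary.star_mul_self_of_mem hU, Matrix.one_mul]
  subst hA hB
  simp [mul_sub, sub_mul, Matrix.mul_assoc, hU₁, Unitary.star_mul_self_of_mem hV]

lemma abs_sub_mul_norm_star_mul_apply_le (hU : U ∈ unitaryGroup ι ℂ)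
    (hV : V ∈ unitaryGroup ι ℂ) (hA : A = U * diagonal (RCLike.ofReal ∘ α) * star U)
    (hB : B = V * diagonal (RCLike.ofReal ∘ β) * star V) (k l : ι) :
    |β l - α k| * ‖(star U * V) k l‖ ≤ ‖B - A‖ := by
  rw [← CStarRing.norm_star_mul_mul_of_mem_unitary hU hV (B - A)]
  refine le_trans (le_of_eq ?_) (norm_apply_le_l2_opNorm _ k l)
  have hentry (w : ℂ) :
      w * (RCLike.ofReal ∘ β) l - (RCLike.ofReal ∘ α) k * w = ((β l - α k : ℝ) : ℂ) * w := by
    simp only [Function.comp_apply, RCLike.ofReal_eq_complex_ofReal, Complex.ofReal_sub]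
    ring
  rw [star_mul_sub_mul_eq hU hV hA hB, sub_apply, mul_diagonal, diagonal_mul, hentry, norm_mul,
    Complex.norm_real, Real.norm_eq_abs]

lemma star_mul_residual_mul_apply (hU : U ∈ unitaryGroup ι ℂ) (hV : V ∈ unitaryGroup ι ℂ)
    (hA : A = U * diagonal (RCLike.ofReal ∘ α) * star U)
    (hB : B = V * diagonal (RCLike.ofReal ∘ β) * star V) (f : ℝ → ℝ) (i k : ι) :
    (star U * (V * diagonal (fun j => (f (β j) : ℂ)) * star V -
        U * diagonal (fun j => (f (α j) : ℂ)) * star U -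
        U * (dslopeMatrix f α α ⊙ (star U * (B - A) * U)) * star U) * U) i k =
      ∑ l, (dslopeMatrix f α β i l - dslopeMatrix f α α i k) *
        (star U * (B - A) * V) i l * star ((star U * V) k l) := by
  have hU₁ (M : Matrix ι ι ℂ) : star U * (U * M) = M := by
    rw [← Matrix.mul_assoc, Unitary.star_mul_self_of_mem hU, Matrix.one_mul]
  have hV₂ (M : Matrix ι ι ℂ) : V * (star V * M) = M := by
    rw [← Matrix.mul_assoc, Unitary.mul_star_self_of_mem hV, Matrix.one_mul]
  have hXW : star U * (B - A) * U = star U * (B - A) * V * star (star U * V) := by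
    simp [star_mul, Matrix.mul_assoc, hV₂]
  have hconj : star U * (V * diagonal (fun j => (f (β j) : ℂ)) * star V -
        U * diagonal (fun j => (f (α j) : ℂ)) * star U -
        U * (dslopeMatrix f α α ⊙ (star U * (B - A) * U)) * star U) * U =
      (dslopeMatrix f α β ⊙ (star U * (B - A) * V)) * star (star U * V) -
        dslopeMatrix f α α ⊙ (star U * (B - A) * V * star (star U * V)) := by
    rw [star_mul_sub_mul_eq hU hV hA hB, ← mul_diagonal_sub_diagonal_mul_eq_dslopeMatrix_hadamard,
      ← star_mul_sub_mul_eq hU hV hA hB, ← hXW]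
    simp [mul_sub, sub_mul, Matrix.mul_assoc, star_mul, hU₁, hV₂, Unitary.star_mul_self_of_mem hU]
  rw [hconj, hadamard_mul_star_sub_hadamard_apply]

lemma norm_residual_le (hU : U ∈ unitaryGroup ι ℂ) (hV : V ∈ unitaryGroup ι ℂ)
    (hA : A = U * diagonal (RCLike.ofReal ∘ α) * star U)
    (hB : B = V * diagonal (RCLike.ofReal ∘ β) * star V) (f : ℝ → ℝ) :
    ‖V * diagonal (fun j => (f (β j) : ℂ)) * star V -
        U * diagonal (fun j => (f (α j) : ℂ)) * star U -
        U * (dslopeMatrix f α α ⊙ (star U * (B - A) * U)) * star U‖ ≤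
      ∑ i, ∑ k, ∑ l, |dslope f (α i) (β l) - dslope f (α i) (α k)| * ‖(star U * V) k l‖ *
        ‖(star U * (B - A) * V) i l‖ := by
  rw [← CStarRing.norm_star_mul_mul_of_mem_unitary hU hU]
  refine (l2_opNorm_le_sum_norm_apply _).trans
    (Finset.sum_le_sum fun i _ => Finset.sum_le_sum fun k _ => ?_)
  rw [star_mul_residual_mul_apply hU hV hA hB f i k]
  refine (norm_sum_le _ _).trans (le_of_eq (Finset.sum_congr rfl fun l _ => ?_))
  simp only [dslopeMatrix, of_apply, norm_mul, norm_star, ← Complex.ofReal_sub,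
    Complex.norm_real, Real.norm_eq_abs]
  ring

lemma norm_residual_le_mul (hU : U ∈ unitaryGroup ι ℂ) (hV : V ∈ unitaryGroup ι ℂ)
    (hA : A = U * diagonal (RCLike.ofReal ∘ α) * star U)
    (hB : B = V * diagonal (RCLike.ofReal ∘ β) * star V) {f : ℝ → ℝ} {R δ η : ℝ}
    (hf : ∀ a b c w : ℝ, |a| ≤ R → |b| ≤ R → |c| ≤ R → 0 ≤ w → w ≤ 1 →
      |b - c| * w ≤ δ → |dslope f a b - dslope f a c| * w ≤ η)
    (hα : ∀ i, |α i| ≤ R) (hβ : ∀ i, |β i| ≤ R) (hBA : ‖B - A‖ ≤ δ) (hη : 0 ≤ η) :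
    ‖V * diagonal (fun j => (f (β j) : ℂ)) * star V -
        U * diagonal (fun j => (f (α j) : ℂ)) * star U -
        U * (dslopeMatrix f α α ⊙ (star U * (B - A) * U)) * star U‖ ≤
      Fintype.card ι ^ 3 * η * ‖B - A‖ := by
  have hX (i l : ι) : ‖(star U * (B - A) * V) i l‖ ≤ ‖B - A‖ :=
    CStarRing.norm_star_mul_mul_of_mem_unitary hU hV (B - A) ▸ norm_apply_le_l2_opNorm _ i l
  have hW (k l : ι) : ‖(star U * V) k l‖ ≤ 1 :=
    entry_norm_bound_of_unitary (mul_mem (Unitary.star_mem hU) hV) k l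
  calc _ ≤ _ := norm_residual_le hU hV hA hB f
    _ ≤ ∑ i : ι, ∑ k : ι, ∑ l : ι, η * ‖B - A‖ :=
        Finset.sum_le_sum fun i _ => Finset.sum_le_sum fun k _ => Finset.sum_le_sum fun l _ =>
          mul_le_mul (hf _ _ _ _ (hα i) (hβ l) (hα k) (norm_nonneg _) (hW k l)
            ((abs_sub_mul_norm_star_mul_apply_le hU hV hA hB k l).trans hBA)) (hX i l)
            (norm_nonneg _) hη
    _ = Fintype.card ι ^ 3 * η * ‖B - A‖ := by
        simp only [Finset.sum_const, Finset.card_univ, nsmul_eq_mul]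
        ring

end

theorem herFun_add_sub_sub_le {f : ℝ → ℝ} (hf : ContDiff ℝ 1 f) {A : Matrix ι ι ℂ}
    (hA : A.IsHermitian) {ε : ℝ} (hε : 0 < ε) :
    ∃ δ > 0, ∀ E : Matrix ι ι ℂ, E.IsHermitian → ‖E‖ ≤ δ →
      ‖herFun f (A + E) - herFun f A -
        (hA.eigenvectorUnitary : Matrix ι ι ℂ) *
          (dslopeMatrix f hA.eigenvalues hA.eigenvalues ⊙
            (star (hA.eigenvectorUnitary : Matrix ι ι ℂ) * E * hA.eigenvectorUnitary)) *
          star (hA.eigenvectorUnitary : Matrix ι ι ℂ)‖ ≤ ε * ‖E‖ := by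
  set N : ℝ := (Fintype.card ι : ℝ)
  have hε₁ : 0 < ε / (N ^ 3 + 1) := by positivity
  obtain ⟨δ, hδ, hg⟩ := exists_abs_sub_mul_le_of_continuous (continuous_uncurry_dslope hf)
    (‖A‖ + 1) hε₁
  refine ⟨min δ 1, by positivity, fun E hE hEδ => ?_⟩
  have hAE : (A + E).IsHermitian := hA.add hE
  have hα (i : ι) : |hA.eigenvalues i| ≤ ‖A‖ + 1 :=
    (hA.abs_eigenvalues_le_l2_opNorm i).trans (by linarith)
  have hβ (i : ι) : |hAE.eigenvalues i| ≤ ‖A‖ + 1 :=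
    (hAE.abs_eigenvalues_le_l2_opNorm i).trans
      ((norm_add_le _ _).trans (by linarith [min_le_right δ 1]))
  have h := norm_residual_le_mul hA.eigenvectorUnitary.2 hAE.eigenvectorUnitary.2
    hA.spectral_theorem hAE.spectral_theorem hg hα hβ
    ((add_sub_cancel_left A E).symm ▸ hEδ.trans (min_le_left _ _)) hε₁.le
  rw [add_sub_cancel_left] at h
  rw [herFun, dif_pos hAE, herFun, dif_pos hA]
  refine h.trans ?_
  calc N ^ 3 * (ε / (N ^ 3 + 1)) * ‖E‖ = N ^ 3 / (N ^ 3 + 1) * ε * ‖E‖ := by ring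
    _ ≤ ε * ‖E‖ := by
        gcongr
        exact mul_le_of_le_one_left hε.le (div_le_one_of_le₀ (by linarith) (by positivity))

end Matrix

section PosPartRpow

variable {s : ℝ}

lemma hasDerivAt_ite_nonneg_rpow (hs : 1 < s) (t : ℝ) :
    HasDerivAt (fun t : ℝ => if 0 ≤ t then t ^ s else 0) (s * max t 0 ^ (s - 1)) t := by
  rcases lt_trichotomy t 0 with ht | rfl | ht
  · rw [max_eq_right ht.le, Real.zero_rpow (by linarith), mul_zero]
    refine (hasDerivAt_const t (0 : ℝ)).congr_of_eventuallyEq ?_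
    filter_upwards [gt_mem_nhds ht] with x hx
    exact if_neg (not_le.2 hx)
  · have hright : HasDerivWithinAt (fun t : ℝ => if 0 ≤ t then t ^ s else 0)
        (s * max 0 0 ^ (s - 1)) (Set.Ici 0) 0 := by
      rw [max_self]
      exact (Real.hasDerivAt_rpow_const (Or.inr hs.le)).hasDerivWithinAt.congr
        (fun x hx => if_pos hx) (if_pos le_rfl)
    have hleft : HasDerivWithinAt (fun t : ℝ => if 0 ≤ t then t ^ s else 0)
        (s * max 0 0 ^ (s - 1)) (Set.Iic 0) 0 := by
      rw [max_self, Real.zero_rpow (by linarith), mul_zero]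
      refine (hasDerivAt_const (0 : ℝ) (0 : ℝ)).hasDerivWithinAt.congr (fun x hx => ?_) ?_
      · split_ifs with h
        · rw [le_antisymm hx h, Real.zero_rpow (by linarith)]
        · rfl
      · simp [Real.zero_rpow (by linarith : s ≠ 0)]
    simpa [Set.Ici_union_Iic] using hright.union hleft
  · rw [max_eq_left ht.le]
    refine (Real.hasDerivAt_rpow_const (Or.inl ht.ne')).congr_of_eventuallyEq ?_
    filter_upwards [lt_mem_nhds ht] with x hx
    exact if_pos hx.le

lemma contDiff_ite_nonneg_rpow (hs : 1 < s) :
    ContDiff ℝ 1 (fun t : ℝ => if 0 ≤ t then t ^ s else 0) := by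
  rw [contDiff_one_iff_deriv]
  refine ⟨fun t => (hasDerivAt_ite_nonneg_rpow hs t).differentiableAt, ?_⟩
  rw [funext fun t => (hasDerivAt_ite_nonneg_rpow hs t).deriv]
  exact continuous_const.mul
    ((continuous_id.max continuous_const).rpow_const fun _ => Or.inr (by linarith))

lemma divPowDeriv_eq_dslopeMatrix {ι : Type*} (hs : 1 < s) {α : ι → ℝ} (hα : ∀ i, 0 ≤ α i) :
    divPowDeriv s α = Matrix.dslopeMatrix (fun t : ℝ => if 0 ≤ t then t ^ s else 0) α α := by
  ext i j
  simp only [divPowDeriv, Matrix.dslopeMatrix, Matrix.of_apply]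
  split_ifs with hij hi0
  · rw [← hij, hi0, dslope_same, (hasDerivAt_ite_nonneg_rpow hs 0).deriv, max_self,
      Real.zero_rpow (by linarith), mul_zero, Complex.ofReal_zero]
  · rw [← hij, dslope_same, (hasDerivAt_ite_nonneg_rpow hs _).deriv, max_eq_left (hα i)]
  · rw [dslope_of_ne _ (Ne.symm hij), slope_def_field, if_pos (hα i), if_pos (hα j),
      ← neg_sub (α i ^ s), ← neg_sub (α i), neg_div_neg_eq]

end PosPartRpow

/-- For `s > 1`, the function `f(t) = t^s` for `t ≥ 0`, `f(t) = 0` for `t < 0`, is `C¹`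
on `ℝ`, and for PSD `A = U Λ_α U*`, `E ↦ (A+E)^s` is Fréchet differentiable at `0` with
derivative `E ↦ U([f,α] ∘ (U*EU))U*`. -/
theorem pow_differentiable_singular {n : ℕ} (s : ℝ) (hs : 1 < s)
    (A : Matrix (Fin n) (Fin n) ℂ) (hA : A.PosSemidef) :
    ContDiff ℝ 1 (fun t : ℝ => if 0 ≤ t then t ^ s else 0) ∧
    ∀ ε > (0 : ℝ), ∃ δ > (0 : ℝ),
      ∀ E : Matrix (Fin n) (Fin n) ℂ, E.IsHermitian → ‖E‖ ≤ δ →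
        ‖herFun (fun t : ℝ => if 0 ≤ t then t ^ s else 0) (A + E) -
          herFun (fun t : ℝ => if 0 ≤ t then t ^ s else 0) A -
          (hA.1.eigenvectorUnitary : Matrix (Fin n) (Fin n) ℂ) *
            (divPowDeriv s hA.1.eigenvalues ⊙
              (star (hA.1.eigenvectorUnitary : Matrix (Fin n) (Fin n) ℂ) * E *
                (hA.1.eigenvectorUnitary : Matrix (Fin n) (Fin n) ℂ))) *
            star (hA.1.eigenvectorUnitary : Matrix (Fin n) (Fin n) ℂ)‖ ≤ ε * ‖E‖ := by
  have hf := contDiff_ite_nonneg_rpow hs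
  refine ⟨hf, fun ε hε => ?_⟩
  rw [divPowDeriv_eq_dslopeMatrix hs hA.eigenvalues_nonneg]
  exact Matrix.herFun_add_sub_sub_le hf hA.1 hε
end

section
/- Let Λ⁺ be an l×l positive definite diagonal matrix and C₁ an l×m matrix. Define V_ap = [[I_l, −(Λ⁺)^{-1}C₁],[C₁*(Λ⁺)^{-1}, I_m]]. Then the columns of the first block column of V_ap have pairwise inner products of size O(‖C₁‖²) off the diagonal and norms 1 + O(‖C₁‖²), and there exists a matrix W with orthonormal columns (W*W = I) such that the first block column of V_ap equals the corresponding columns of W up to O(‖C₁‖²), and similarly for the second block column. Consequently V_ap = W + O(‖C₁‖²) for some unitary W. -/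
open Matrix
open scoped Matrix.Norms.L2Operator Matrix ComplexOrder

/-- The approximate eigenvector matrix `V_ap = [[I, −(Λ⁺)⁻¹C₁],[C₁*(Λ⁺)⁻¹, I]]`. -/
noncomputable def Vap {l m : ℕ} (d : Fin l → ℝ) (C₁ : Matrix (Fin l) (Fin m) ℂ) :
    Matrix (Fin l ⊕ Fin m) (Fin l ⊕ Fin m) ℂ :=
  Matrix.fromBlocks 1 (-((Matrix.diagonal fun i => ((d i)⁻¹ : ℂ)) * C₁))
    (C₁ᴴ * Matrix.diagonal fun i => ((d i)⁻¹ : ℂ)) 1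

/-!
`V_ap = 1 + a` with `a = E - Eᴴ` skew-adjoint, `E = [[0, 0], [C₁ᴴ(Λ⁺)⁻¹, 0]]`, so `‖a‖ = O(‖C₁‖)`.
Skew-adjointness gives `V_apᴴ V_ap - 1 = aᴴ a`, of norm `‖a‖²`. The Cayley transform
`W = (1 + a/2)(1 - a/2)⁻¹` of a skew-adjoint element is unitary, and
`V_ap - W = -½ a² (1 - a/2)⁻¹` is again `O(‖a‖²)`.
-/

theorem Units.star_mul_inv_mem_unitary {A : Type*} [Monoid A] [StarMul A] (u : Aˣ)
    (hu : Commute (star (u : A)) u) : star (u : A) * ↑u⁻¹ ∈ unitary A := by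
  have hv : Commute (star u) u := Units.ext hu
  have hw : star (u : A) * ↑u⁻¹ = ↑(star u * u⁻¹) := by simp [Units.coe_star]
  rw [hw, Unitary.mem_iff, ← Units.coe_star, ← Units.val_mul, ← Units.val_mul, ← Units.val_one,
    Units.val_inj, Units.val_inj, star_mul, star_inv, star_star]
  generalize star u = v at hv
  constructor
  · rw [mul_assoc, ← mul_assoc u, ← hv.eq]
    group
  · rw [mul_assoc, ← mul_assoc u⁻¹, ← hv.inv_inv.eq]
    group

section CStarRing

variable {A : Type*} [NormedRing A] [StarRing A] [CStarRing A]

theorem norm_inv_oneSub_le [HasSummableGeomSeries A] (t : A) (ht : ‖t‖ < 1) :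
    ‖(↑(Units.oneSub t ht)⁻¹ : A)‖ ≤ (1 - ‖t‖)⁻¹ := by
  nontriviality A
  have := tsum_geometric_le_of_norm_lt_one t ht
  rwa [CStarRing.norm_one, sub_self, zero_add] at this

theorem norm_star_one_add_mul_one_add_sub_one {a : A} (ha : a ∈ skewAdjoint A) :
    ‖star (1 + a) * (1 + a) - 1‖ = ‖a‖ ^ 2 := by
  have h : star (1 + a) * (1 + a) - 1 = star a * a := by
    rw [star_add, star_one, skewAdjoint.mem_iff.mp ha]
    noncomm_ring
  rw [h, CStarRing.norm_star_mul_self, sq]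

end CStarRing

theorem exists_mem_unitary_norm_one_add_sub_le {A : Type*} [CStarAlgebra A] {a : A}
    (ha : a ∈ skewAdjoint A) (ha1 : ‖a‖ ≤ 1) :
    ∃ W ∈ unitary A, ‖1 + a - W‖ ≤ ‖a‖ ^ 2 := by
  set g := (2⁻¹ : ℂ) • a with hg
  have ha2 : a = g + g := by rw [hg, ← add_smul]; norm_num
  have hg_norm : ‖g‖ = ‖a‖ / 2 := by rw [hg, norm_smul]; norm_num; ring
  have hg1 : ‖g‖ ≤ 1 / 2 := by rw [hg_norm]; linarith
  set u := Units.oneSub g (by linarith)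
  have hstar : star (u : A) = 1 + g := by
    rw [Units.val_oneSub, star_sub, star_one, hg, star_smul, skewAdjoint.mem_iff.mp ha]
    simp
  have hcomm : Commute (star (u : A)) u := by
    rw [hstar, Units.val_oneSub]
    exact (Commute.one_right _).sub_right ((Commute.one_left g).add_left (Commute.refl g))
  refine ⟨_, u.star_mul_inv_mem_unitary hcomm, ?_⟩
  have hdiff : 1 + a - star (u : A) * ↑u⁻¹ = -(g * g + g * g) * ↑u⁻¹ := by
    calc 1 + a - star (u : A) * ↑u⁻¹ = ((1 + a) * u - star (u : A)) * ↑u⁻¹ := by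
          rw [sub_mul, mul_assoc, Units.mul_inv, mul_one]
      _ = _ := by
          rw [hstar, Units.val_oneSub, ha2]
          noncomm_ring
  have hinv : ‖(↑u⁻¹ : A)‖ ≤ 2 := by
    refine (norm_inv_oneSub_le g _).trans ?_
    rw [inv_le_comm₀ (by linarith) two_pos]
    linarith
  calc ‖1 + a - star (u : A) * ↑u⁻¹‖ ≤ ‖g * g + g * g‖ * ‖(↑u⁻¹ : A)‖ := by
        rw [hdiff, neg_mul, norm_neg]; exact norm_mul_le _ _
    _ ≤ (2 * ‖g‖ ^ 2) * 2 := by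
        gcongr
        exact (norm_add_le _ _).trans (by nlinarith [norm_mul_le g g])
    _ = ‖a‖ ^ 2 := by rw [hg_norm]; ring

namespace Matrix

variable {𝕜 : Type*} [RCLike 𝕜] {m n m₁ m₂ n₁ n₂ : Type*} [Fintype m] [Fintype n]
  [Fintype m₁] [Fintype m₂] [Fintype n₁] [Fintype n₂]

theorem l2_opNorm_one_le [DecidableEq n] : ‖(1 : Matrix n n 𝕜)‖ ≤ 1 := by
  nontriviality Matrix n n 𝕜
  exact CStarRing.norm_one.le

theorem l2_opNorm_le_one_of_conjTranspose_mul_self_eq_one [DecidableEq n] {J : Matrix m n 𝕜}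
    (hJ : Jᴴ * J = 1) : ‖J‖ ≤ 1 := by
  have h := l2_opNorm_conjTranspose_mul_self J
  rw [hJ] at h
  nlinarith [l2_opNorm_one_le (𝕜 := 𝕜) (n := n), norm_nonneg J]

theorem l2_opNorm_fromBlocks_zero_zero_zero_le [DecidableEq m₂] [DecidableEq n₁] [DecidableEq n₂]
    (B : Matrix m₂ n₁ 𝕜) :
    ‖fromBlocks (0 : Matrix m₁ n₁ 𝕜) (0 : Matrix m₁ n₂ 𝕜) B (0 : Matrix m₂ n₂ 𝕜)‖ ≤ ‖B‖ := by
  set P : Matrix (m₁ ⊕ m₂) m₂ 𝕜 := fromRows 0 1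
  set Q : Matrix (n₁ ⊕ n₂) n₁ 𝕜 := fromRows 1 0
  have hP : ‖P‖ ≤ 1 := l2_opNorm_le_one_of_conjTranspose_mul_self_eq_one <| by
    simp [P, conjTranspose_fromRows_eq_fromCols_conjTranspose, fromCols_mul_fromRows]
  have hQ : ‖Qᴴ‖ ≤ 1 := by
    rw [l2_opNorm_conjTranspose]
    exact l2_opNorm_le_one_of_conjTranspose_mul_self_eq_one <| by
      simp [Q, conjTranspose_fromRows_eq_fromCols_conjTranspose, fromCols_mul_fromRows]
  have hfac : fromBlocks (0 : Matrix m₁ n₁ 𝕜) (0 : Matrix m₁ n₂ 𝕜) B (0 : Matrix m₂ n₂ 𝕜)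
      = P * B * Qᴴ := by
    rw [conjTranspose_fromRows_eq_fromCols_conjTranspose, fromRows_mul, fromRows_mul_fromCols]
    simp
  rw [hfac]
  calc ‖P * B * Qᴴ‖ ≤ ‖P‖ * ‖B‖ * ‖Qᴴ‖ :=
        (l2_opNorm_mul _ _).trans (mul_le_mul_of_nonneg_right (l2_opNorm_mul _ _) (norm_nonneg _))
    _ ≤ 1 * ‖B‖ * 1 := by gcongr
    _ = ‖B‖ := by ring

end Matrix

theorem Vap_sub_one_eq {l m : ℕ} (d : Fin l → ℝ) (C₁ : Matrix (Fin l) (Fin m) ℂ) :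
    Vap d C₁ - 1 = fromBlocks 0 0 (C₁ᴴ * diagonal fun i => ((d i)⁻¹ : ℂ)) 0
      - (fromBlocks 0 0 (C₁ᴴ * diagonal fun i => ((d i)⁻¹ : ℂ)) 0)ᴴ := by
  have hD : (diagonal fun i => ((d i)⁻¹ : ℂ))ᴴ = diagonal fun i => ((d i)⁻¹ : ℂ) := by
    rw [diagonal_conjTranspose]; congr 1; ext i; simp
  simp [Vap, fromBlocks_conjTranspose, conjTranspose_mul, hD, ← fromBlocks_one, sub_eq_add_neg,
    fromBlocks_neg, fromBlocks_add]

theorem Vap_sub_one_mem_skewAdjoint {l m : ℕ} (d : Fin l → ℝ) (C₁ : Matrix (Fin l) (Fin m) ℂ) :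
    Vap d C₁ - 1 ∈ skewAdjoint (Matrix (Fin l ⊕ Fin m) (Fin l ⊕ Fin m) ℂ) := by
  rw [Vap_sub_one_eq, skewAdjoint.mem_iff, star_eq_conjTranspose, conjTranspose_sub,
    conjTranspose_conjTranspose, neg_sub]

theorem norm_Vap_sub_one_le {l m : ℕ} (d : Fin l → ℝ) (C₁ : Matrix (Fin l) (Fin m) ℂ) :
    ‖Vap d C₁ - 1‖ ≤ 2 * ‖(diagonal fun i => ((d i)⁻¹ : ℂ))‖ * ‖C₁‖ := by
  set D := diagonal fun i => ((d i)⁻¹ : ℂ)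
  have hE : ‖fromBlocks (0 : Matrix (Fin l) (Fin l) ℂ) 0 (C₁ᴴ * D) (0 : Matrix (Fin m) (Fin m) ℂ)‖
      ≤ ‖D‖ * ‖C₁‖ := by
    refine (l2_opNorm_fromBlocks_zero_zero_zero_le _).trans ?_
    rw [mul_comm, ← l2_opNorm_conjTranspose C₁]
    exact l2_opNorm_mul _ _
  rw [Vap_sub_one_eq]
  refine (norm_sub_le _ _).trans ?_
  rw [l2_opNorm_conjTranspose]
  linarith

theorem vap_approx_unitary_general {l m : ℕ} (d : Fin l → ℝ) :
    ∃ K > (0 : ℝ), ∃ δ > (0 : ℝ),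
      ∀ C₁ : Matrix (Fin l) (Fin m) ℂ, ‖C₁‖ ≤ δ →
        ‖star (Vap d C₁) * Vap d C₁ - 1‖ ≤ K * ‖C₁‖ ^ 2 ∧
        ∃ W ∈ Matrix.unitaryGroup (Fin l ⊕ Fin m) ℂ,
          ‖Vap d C₁ - W‖ ≤ K * ‖C₁‖ ^ 2 := by
  set c := 2 * ‖(diagonal fun i => ((d i)⁻¹ : ℂ))‖ + 1
  have hc : 0 < c := by positivity
  refine ⟨c ^ 2, by positivity, c⁻¹, by positivity, fun C₁ hC₁ => ?_⟩
  set a := Vap d C₁ - 1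
  have ha : a ∈ skewAdjoint _ := Vap_sub_one_mem_skewAdjoint d C₁
  have ha_le : ‖a‖ ≤ c * ‖C₁‖ := (norm_Vap_sub_one_le d C₁).trans (by nlinarith [norm_nonneg C₁])
  have ha1 : ‖a‖ ≤ 1 := ha_le.trans <| by
    calc c * ‖C₁‖ ≤ c * c⁻¹ := by gcongr
      _ = 1 := mul_inv_cancel₀ hc.ne'
  have ha_sq : ‖a‖ ^ 2 ≤ c ^ 2 * ‖C₁‖ ^ 2 := by
    rw [← mul_pow]; exact pow_le_pow_left₀ (norm_nonneg a) ha_le 2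
  have hV : Vap d C₁ = 1 + a := (add_sub_cancel 1 (Vap d C₁)).symm
  obtain ⟨W, hW, hVW⟩ := exists_mem_unitary_norm_one_add_sub_le ha ha1
  rw [hV]
  exact ⟨(norm_star_one_add_mul_one_add_sub_one ha).trans_le ha_sq, W, hW, hVW.trans ha_sq⟩

/-- **Gram–Schmidt stability.** The columns of `V_ap` are orthonormal up to `O(‖C₁‖²)`
(`V_ap* V_ap = I + O(‖C₁‖²)`), and there is a unitary `W` (orthonormal columns,
`W*W = I`) with `V_ap = W + O(‖C₁‖²)`. -/
theorem vap_approx_unitary {l m : ℕ} (d : Fin l → ℝ) (hd : ∀ i, 0 < d i) :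
    ∃ K > (0 : ℝ), ∃ δ > (0 : ℝ),
      ∀ C₁ : Matrix (Fin l) (Fin m) ℂ, ‖C₁‖ ≤ δ →
        ‖star (Vap d C₁) * Vap d C₁ - 1‖ ≤ K * ‖C₁‖ ^ 2 ∧
        ∃ W ∈ Matrix.unitaryGroup (Fin l ⊕ Fin m) ℂ,
          ‖Vap d C₁ - W‖ ≤ K * ‖C₁‖ ^ 2 :=
  vap_approx_unitary_general d
end
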